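/- arXiv:1406.7198 — 5 statements merged into one kernel-verified Lean document; each statement's English description precedes it below -/
import Mathlib

section
/- Let p, q, g be integers with p ≥ 1, q ≥ 1 and g ≥ 0, and let Z = {i ∈ ℤ : 0 ≤ i ≤ p−1 and min(⌊i/q⌋, ⌈(p−i)/q⌉) ≥ g}. Then |Z| = p if g = 0; |Z| = p − (2g−1)q if g ≥ 1 and p > (2g−1)q; and |Z| = 0 if g ≥ 1 and p ≤ (2g−1)q. -/
/-- The counting statement underlying Lemma 2.2 of "Non-integer surgery and
branched double covers of alternating knots": the number of `i` in `[0, p-1]`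
with `min(⌊i/q⌋, ⌈(p-i)/q⌉) ≥ g`. -/
theorem stmt_0 (p q g : ℤ) (hp : 1 ≤ p) (hq : 1 ≤ q) (hg : 0 ≤ g)
    (Z : Finset ℤ)
    (hZ : Z = (Finset.Icc 0 (p - 1)).filter
      (fun i : ℤ => g ≤ min (⌊(i : ℚ) / (q : ℚ)⌋) (⌈((p : ℚ) - (i : ℚ)) / (q : ℚ)⌉))) :
    (g = 0 → (Z.card : ℤ) = p) ∧
    (1 ≤ g → (2 * g - 1) * q < p → (Z.card : ℤ) = p - (2 * g - 1) * q) ∧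
    (1 ≤ g → p ≤ (2 * g - 1) * q → Z.card = 0) := by
  have hq' : (0:ℚ) < (q:ℚ) := by exact_mod_cast lt_of_lt_of_le one_pos hq
  have key : ∀ i : ℤ,
      (g ≤ min (⌊(i : ℚ) / (q : ℚ)⌋) (⌈((p : ℚ) - (i : ℚ)) / (q : ℚ)⌉)) ↔
      (g * q ≤ i ∧ i ≤ p - (g - 1) * q - 1) := by
    intro i
    rw [le_min_iff, Int.le_floor]
    constructor
    · rintro ⟨h1, h2⟩
      constructor
      · have := (le_div_iff₀ hq').mp h1
        exact_mod_cast this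
      · have h3 : (g - 1 : ℤ) < ⌈((p : ℚ) - (i : ℚ)) / (q : ℚ)⌉ := by omega
        have h4 := Int.lt_ceil.mp h3
        have h5 : ((g : ℚ) - 1) * (q : ℚ) < (p : ℚ) - (i : ℚ) :=
          (lt_div_iff₀ hq').mp (by push_cast at h4 ⊢; linarith)
        have : ((g - 1) * q : ℤ) < p - i := by exact_mod_cast (by push_cast; linarith : (((g-1)*q : ℤ) : ℚ) < ((p - i : ℤ) : ℚ))
        omega
    · rintro ⟨h1, h2⟩
      constructor
      · rw [le_div_iff₀ hq']
        exact_mod_cast h1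
      · have h5 : ((g - 1) * q : ℤ) < p - i := by omega
        have h5' : ((g : ℚ) - 1) * (q : ℚ) < (p : ℚ) - (i : ℚ) := by exact_mod_cast h5
        have h6 : ((g : ℚ) - 1) < ((p : ℚ) - (i : ℚ)) / (q : ℚ) := (lt_div_iff₀ hq').mpr h5'
        have := Int.lt_ceil.mpr (show ((g - 1 : ℤ) : ℚ) < ((p : ℚ) - (i : ℚ)) / (q : ℚ) by push_cast; linarith)
        omega
  have hZ' : Z = Finset.Icc (max 0 (g * q)) (min (p - 1) (p - (g - 1) * q - 1)) := by
    rw [hZ]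
    ext i
    simp only [Finset.mem_filter, Finset.mem_Icc, key, le_max_iff, max_le_iff, le_min_iff,
      min_le_iff]
    omega
  have hcard : (Z.card : ℤ) =
      (min (p - 1) (p - (g - 1) * q - 1) + 1 - max 0 (g * q)).toNat := by
    rw [hZ', Int.card_Icc]
  have e1 : (g - 1) * q = g * q - q := by ring
  have e2 : (2 * g - 1) * q = 2 * (g * q) - q := by ring
  have hgq0 : 0 ≤ g * q := mul_nonneg hg (by omega)
  constructor
  · intro h0
    subst h0
    simp only [zero_mul] at hcard
    rw [hcard]
    omega
  constructor
  · intro hg1 hlt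
    rw [e2] at hlt
    have hqgq : q ≤ g * q := le_mul_of_one_le_left (by omega) hg1
    rw [hcard, e1]
    omega
  · intro hg1 hle
    rw [e2] at hle
    have hqgq : q ≤ g * q := le_mul_of_one_le_left (by omega) hg1
    have : (Z.card : ℤ) = 0 := by rw [hcard, e1]; omega
    exact_mod_cast this
end

section
/- Let σ_1 ≤ σ_2 ≤ ⋯ ≤ σ_s be nonnegative integers. Then the following are equivalent: (a) for every integer k with 0 ≤ k ≤ σ_1 + ⋯ + σ_s there exists a subset A ⊆ {1, …, s} with k = Σ_{i∈A} σ_i; (b) σ_1 ≤ 1 and σ_i ≤ σ_1 + ⋯ + σ_{i−1} + 1 for every i with 1 < i ≤ s. -/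
open Finset

variable {ι : Type*}

def SubsetSumComplete (t : Finset ι) (f : ι → ℕ) : Prop :=
  ∀ k ≤ ∑ i ∈ t, f i, ∃ A ⊆ t, ∑ i ∈ A, f i = k

def ChangemakerCondition [LinearOrder ι] (t : Finset ι) (f : ι → ℕ) : Prop :=
  ∀ i ∈ t, f i ≤ ∑ j ∈ t with j < i, f j + 1

namespace SubsetSumComplete

variable {t : Finset ι} {f : ι → ℕ}

theorem empty (f : ι → ℕ) : SubsetSumComplete ∅ f := fun k hk =>
  ⟨∅, empty_subset _, by simp_all⟩

/-- A value `k` above `∑ i ∈ t, f i` is reached as `f a` plus a subset sum of `t`, since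
`k - f a ≤ ∑ i ∈ t, f i` is exactly the hypothesis `f a ≤ ∑ i ∈ t, f i + 1`. -/
theorem insert [DecidableEq ι] (h : SubsetSumComplete t f) {a : ι} (ha : a ∉ t)
    (hfa : f a ≤ ∑ i ∈ t, f i + 1) : SubsetSumComplete (insert a t) f := by
  intro k hk
  rw [sum_insert ha] at hk
  by_cases hkt : k ≤ ∑ i ∈ t, f i
  · obtain ⟨A, hAt, hA⟩ := h k hkt
    exact ⟨A, hAt.trans (subset_insert a t), hA⟩
  · obtain ⟨A, hAt, hA⟩ := h (k - f a) (by omega)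
    refine ⟨Insert.insert a A, insert_subset_insert a hAt, ?_⟩
    rw [sum_insert (fun haA => ha (hAt haA)), hA]
    omega

theorem of_changemakerCondition [LinearOrder ι] (ht : ChangemakerCondition t f) :
    SubsetSumComplete t f := by
  induction t using Finset.induction_on_max with
  | empty => exact empty f
  | insert a t hlt ih =>
    have ha : a ∉ t := fun hat => lt_irrefl a (hlt a hat)
    have hbelow_a : {j ∈ Insert.insert a t | j < a} = t := by
      ext j
      simp only [mem_filter, mem_insert]
      exact ⟨fun ⟨hj, hja⟩ => hj.resolve_left hja.ne, fun hj => ⟨Or.inr hj, hlt j hj⟩⟩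
    have hbelow (i : ι) (hi : i ∈ t) : {j ∈ Insert.insert a t | j < i} = {j ∈ t | j < i} := by
      rw [filter_insert, if_neg (hlt i hi).not_gt]
    refine (ih fun i hi => ?_).insert ha ?_
    · simpa [hbelow i hi] using ht i (mem_insert_of_mem hi)
    · simpa [hbelow_a] using ht a (mem_insert_self a t)

end SubsetSumComplete

/-- If `f i` exceeded `S + 1`, where `S` is the sum of `f` below `i`, then `S + 1` would be a
subset sum; by monotonicity every term of it lies below `i`, so it would be at most `S`. -/
theorem ChangemakerCondition.of_subsetSumComplete [LinearOrder ι] {t : Finset ι} {f : ι → ℕ}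
    (hf : Monotone f) (h : SubsetSumComplete t f) : ChangemakerCondition t f := by
  intro i hi
  by_contra! hlarge
  set S := ∑ j ∈ t with j < i, f j
  obtain ⟨A, hAt, hA⟩ := h (S + 1) (hlarge.le.trans (single_le_sum (by simp) hi))
  have hA_below : A ⊆ {j ∈ t | j < i} := fun j hj => by
    refine mem_filter.2 ⟨hAt hj, lt_of_not_ge fun hij => ?_⟩
    have : f j ≤ S + 1 := hA ▸ single_le_sum (by simp) hj
    exact absurd (hf hij) (by omega)
  have : S + 1 ≤ S := hA ▸ sum_le_sum_of_subset hA_below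
  omega

/-- Brown's changemaker theorem (Proposition 6.3 of the paper): a nondecreasing
tuple `σ_1 ≤ ⋯ ≤ σ_s` of nonnegative integers represents every integer
`0 ≤ k ≤ σ_1 + ⋯ + σ_s` as a subset sum if and only if it satisfies the
changemaker condition `σ_i ≤ σ_1 + ⋯ + σ_{i-1} + 1` for all `i` (which for the
least index reads `σ_1 ≤ 1`). -/
theorem stmt_1 (s : ℕ) (σ : Fin s → ℕ) (hmono : Monotone σ) :
    (∀ k : ℕ, k ≤ ∑ i, σ i → ∃ A : Finset (Fin s), k = ∑ i ∈ A, σ i) ↔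
    (∀ i : Fin s, σ i ≤ (∑ j ∈ Finset.univ.filter (· < i), σ j) + 1) := by
  have hcomplete : SubsetSumComplete univ σ ↔
      ∀ k : ℕ, k ≤ ∑ i, σ i → ∃ A : Finset (Fin s), k = ∑ i ∈ A, σ i :=
    forall₂_congr fun k _ => ⟨fun ⟨A, _, hA⟩ => ⟨A, hA.symm⟩, fun ⟨A, hA⟩ => ⟨A, subset_univ A, hA.symm⟩⟩
  have hchangemaker : ChangemakerCondition univ σ ↔
      ∀ i : Fin s, σ i ≤ (∑ j ∈ Finset.univ.filter (· < i), σ j) + 1 := by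
    simp [ChangemakerCondition]
  rw [← hcomplete, ← hchangemaker]
  exact ⟨ChangemakerCondition.of_subsetSumComplete hmono,
    SubsetSumComplete.of_changemakerCondition⟩
end

section
/- Let d ≥ 1 and let c_0, c_1, …, c_{2d−1} be integers with c_i ≥ 1 for all i. Then [c_0, c_1, …, c_{2d−1}]⁺ = [c_0+1, 2^[c_1−1], c_2+2, 2^[c_3−1], c_4+2, …, c_{2d−2}+2, 2^[c_{2d−1}−1]]⁻, where 2^[k] denotes the integer 2 repeated k times (an empty block when k = 0); in particular for d = 1 this reads [c_0, c_1]⁺ = [c_0+1, 2^[c_1−1]]⁻. -/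
/-!
Pairs `c_{2i}, c_{2i+1}` are converted one at a time, from the right. Prepending `2` to a negative
continued fraction acts on its value as `y ↦ 2 - y⁻¹`, which in the coordinate
`(1 - y⁻¹)⁻¹ = y / (y - 1)` is the translation by `1`. So if the tail has value `x + 1`, then
`2^[b-1]` followed by it has coordinate `b + x⁻¹`, and
`[a + 1, 2^[b-1], …]⁻ = a + (b + x⁻¹)⁻¹ = [a, b, …]⁺`. Raising `a + 1` to `a + 2` gives the value
`[a, b, …]⁺ + 1` needed for the next pair.
-/

/-- The positive continued fraction `[b_0, …, b_n]⁺ = b_0 + 1/[b_1, …, b_n]⁺`. -/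
def cfPlus : List ℚ → ℚ
  | [] => 0
  | [b] => b
  | b :: c :: rest => b + 1 / cfPlus (c :: rest)

/-- The negative continued fraction `[b_0, …, b_n]⁻ = b_0 - 1/[b_1, …, b_n]⁻`. -/
def cfMinus : List ℚ → ℚ
  | [] => 0
  | [b] => b
  | b :: c :: rest => b - 1 / cfMinus (c :: rest)

-- Both hold also for `L = []`, because `cfPlus [] = cfMinus [] = 0` and `0⁻¹ = 0`.
lemma cfPlus_cons (a : ℚ) (L : List ℚ) : cfPlus (a :: L) = a + (cfPlus L)⁻¹ := by
  cases L <;> simp [cfPlus]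

lemma cfMinus_cons (a : ℚ) (L : List ℚ) : cfMinus (a :: L) = a - (cfMinus L)⁻¹ := by
  cases L <;> simp [cfMinus]

lemma List.map_range_add_two {α : Type*} (n : ℕ) (f : ℕ → α) :
    (List.range (n + 2)).map f = f 0 :: f 1 :: (List.range n).map (fun i => f (i + 2)) := by
  simp [List.range_succ_eq_map]

lemma List.flatMap_range_succ {α : Type*} (n : ℕ) (f : ℕ → List α) :
    (List.range (n + 1)).flatMap f = f 0 ++ (List.range n).flatMap (fun i => f (i + 1)) := by
  simp [List.range_succ_eq_map, List.flatMap_map]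

lemma cfMinus_replicate_two_append (k : ℕ) (M : List ℚ) (hM : (cfMinus M)⁻¹ < 1) :
    (cfMinus (List.replicate k 2 ++ M))⁻¹ < 1 ∧
      (1 - (cfMinus (List.replicate k 2 ++ M))⁻¹)⁻¹ = (1 - (cfMinus M)⁻¹)⁻¹ + k := by
  induction k with
  | zero => simpa using hM
  | succ k ih =>
    obtain ⟨hw, hshift⟩ := ih
    rw [List.replicate_succ, List.cons_append, cfMinus_cons, Nat.cast_succ, ← add_assoc, ← hshift]
    set w := (cfMinus (List.replicate k 2 ++ M))⁻¹
    have h2w : 1 - (2 - w)⁻¹ = (1 - w) / (2 - w) := by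
      field_simp [show 2 - w ≠ 0 by linarith]
      ring
    constructor
    · exact inv_lt_one_of_one_lt₀ (by linarith)
    · rw [h2w, inv_div]
      field_simp [show 1 - w ≠ 0 by linarith]
      ring

lemma Int.cast_toNat_sub_one_add_one {n : ℤ} (hn : 1 ≤ n) : ((n - 1).toNat : ℚ) + 1 = n := by
  have := Int.toNat_of_nonneg (sub_nonneg.2 hn)
  exact_mod_cast (by omega : ((n - 1).toNat : ℤ) + 1 = n)

/-- `cfMinus N = cfPlus S + 1`, in a form that also covers `N = S = []`, where the junk value
`0⁻¹ = 0` plays the role of `∞⁻¹`. -/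
def MinusPlusRel (N S : List ℚ) : Prop :=
  (cfMinus N)⁻¹ < 1 ∧ (1 - (cfMinus N)⁻¹)⁻¹ = 1 + (cfPlus S)⁻¹

lemma minusPlusRel_nil : MinusPlusRel [] [] := by
  simp [MinusPlusRel, cfMinus, cfPlus]

lemma cfPlus_cons_cons_eq_cfMinus (a : ℚ) {b : ℤ} (hb : 1 ≤ b) {M S : List ℚ}
    (h : MinusPlusRel M S) :
    cfPlus (a :: b :: S) = cfMinus ((a + 1) :: (List.replicate (b - 1).toNat 2 ++ M)) := by
  have hshift := (cfMinus_replicate_two_append (b - 1).toNat M h.1).2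
  have hb' : (b : ℚ) + (cfPlus S)⁻¹ =
      (1 - (cfMinus (List.replicate (b - 1).toNat 2 ++ M))⁻¹)⁻¹ := by
    rw [hshift, h.2, ← Int.cast_toNat_sub_one_add_one hb]
    ring
  rw [cfPlus_cons, cfPlus_cons, cfMinus_cons, hb', inv_inv]
  ring

lemma minusPlusRel_of_eq {N S : List ℚ} (hS : 0 < cfPlus S) (h : cfMinus N = cfPlus S + 1) :
    MinusPlusRel N S := by
  rw [MinusPlusRel, h]
  constructor
  · exact inv_lt_one_of_one_lt₀ (by linarith)
  · field_simp [hS.ne']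
    ring

lemma MinusPlusRel.cons {M S : List ℚ} (h : MinusPlusRel M S) {a : ℚ} (ha : 0 ≤ a) {b : ℤ}
    (hb : 1 ≤ b) :
    MinusPlusRel ((a + 2) :: (List.replicate (b - 1).toNat 2 ++ M)) (a :: b :: S) := by
  refine minusPlusRel_of_eq ?_ ?_
  · have hinv : 0 < (1 - (cfMinus M)⁻¹)⁻¹ := inv_pos.2 (by linarith [h.1])
    have hb' : (1 : ℚ) ≤ b := by exact_mod_cast hb
    have hden : 0 < (b : ℚ) + (cfPlus S)⁻¹ := by linarith [h.2]
    rw [cfPlus_cons, cfPlus_cons]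
    linarith [inv_pos.2 hden]
  · rw [cfPlus_cons_cons_eq_cfMinus a hb h, cfMinus_cons, cfMinus_cons]
    ring

def minusBlock (c : ℕ → ℤ) (j : ℕ) : List ℚ :=
  ((c (2 * j) : ℚ) + 2) :: List.replicate (c (2 * j + 1) - 1).toNat 2

lemma minusBlock_shift (c : ℕ → ℤ) :
    minusBlock (fun i => c (i + 2)) = fun j => minusBlock c (j + 1) := by
  funext j
  simp only [minusBlock, Nat.mul_succ, Nat.add_right_comm]

lemma minusPlusRel_flatMap_minusBlock (e : ℕ) (c : ℕ → ℤ) (hc : ∀ i < 2 * e, 1 ≤ c i) :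
    MinusPlusRel ((List.range e).flatMap (minusBlock c))
      ((List.range (2 * e)).map (fun i => (c i : ℚ))) := by
  induction e generalizing c with
  | zero => exact minusPlusRel_nil
  | succ e ih =>
    have htail := ih (fun i => c (i + 2)) (fun i hi => hc (i + 2) (by omega))
    have hc0 : (0 : ℚ) ≤ c 0 := by exact_mod_cast zero_le_one.trans (hc 0 (by omega))
    rw [List.flatMap_range_succ, ← minusBlock_shift, Nat.mul_succ, List.map_range_add_two]
    exact htail.cons hc0 (hc 1 (by omega))

/-- Conversion between positive and negative continued fractions:
`[c_0, c_1, …, c_{2d-1}]⁺ = [c_0+1, 2^[c_1-1], c_2+2, 2^[c_3-1], …, c_{2d-2}+2, 2^[c_{2d-1}-1]]⁻`,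
where `2^[k]` denotes the integer `2` repeated `k` times. -/
theorem stmt_2 (d : ℕ) (hd : 1 ≤ d) (c : ℕ → ℤ) (hc : ∀ i < 2 * d, 1 ≤ c i) :
    cfPlus ((List.range (2 * d)).map (fun i => (c i : ℚ))) =
    cfMinus (((c 0 : ℚ) + 1) ::
      (List.replicate (c 1 - 1).toNat (2 : ℚ) ++
        (List.range (d - 1)).flatMap (fun j =>
          ((c (2 * (j + 1)) : ℚ) + 2) ::
            List.replicate ((c (2 * (j + 1) + 1)) - 1).toNat (2 : ℚ)))) := by
  obtain ⟨e, rfl⟩ : ∃ e, d = e + 1 := ⟨d - 1, by omega⟩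
  have htail := minusPlusRel_flatMap_minusBlock e (fun i => c (i + 2))
    (fun i hi => hc (i + 2) (by omega))
  rw [Nat.mul_succ, List.map_range_add_two, Nat.add_sub_cancel]
  rw [minusBlock_shift] at htail
  exact cfPlus_cons_cons_eq_cfMinus _ (hc 1 (by omega)) htail
end

section
/- Let G be a finite connected multigraph without self-loops on vertex set V, with associated bilinear form x·y on ℤ^V. Then for every subset R ⊆ V and every z ∈ ℤ^V, one has ([R] − z)·z ≤ 0. -/
/-- The bilinear form of the multigraph with edge multiplicities `ε`:
`x·y = Σ_v d(v) x_v y_v − Σ_{v≠w} ε(v,w) x_v y_w`, where `d(v) = Σ_w ε(v,w)`. -/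
def gform {V : Type*} [Fintype V] [DecidableEq V] (ε : V → V → ℕ) (x y : V → ℤ) : ℤ :=
  (∑ v, (∑ w, (ε v w : ℤ)) * (x v * y v)) -
    ∑ v, ∑ w ∈ Finset.univ.filter (· ≠ v), (ε v w : ℤ) * (x v * y w)

/-- The simple graph underlying the multigraph with edge multiplicities `ε`. -/
def gGraph {V : Type*} (ε : V → V → ℕ) : SimpleGraph V :=
  SimpleGraph.fromRel (fun v w => 0 < ε v w)

/-- Connectivity of the sub-multigraph induced on the set `S`. -/
def gConnOn {V : Type*} (ε : V → V → ℕ) (S : Set V) : Prop :=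
  (SimpleGraph.fromRel (fun v w : S => 0 < ε v.1 w.1)).Connected

/-- `ℤ[V]`, the span of the all-ones vector `[V]` in `ℤ^V`. -/
def onesSub (V : Type*) : Submodule ℤ (V → ℤ) :=
  Submodule.span ℤ ({fun _ => (1 : ℤ)} : Set (V → ℤ))

/-- The characteristic vector `[R] ∈ ℤ^V` of a finite set of vertices. -/
def chiF {V : Type*} [DecidableEq V] (R : Finset V) : V → ℤ :=
  fun v => if v ∈ R then 1 else 0

/-- Irreducibility, in the graph lattice `Λ(G) = ℤ^V/ℤ[V]`, of the class of
`z : ℤ^V`, stated on representatives: the class of `z` cannot be written as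
`x + y` with `x, y` nonzero classes and `x·y ≥ 0`. -/
def gIrredRep {V : Type*} [Fintype V] [DecidableEq V] (ε : V → V → ℕ) (z : V → ℤ) : Prop :=
  ¬ ∃ x y : V → ℤ, x ∉ onesSub V ∧ y ∉ onesSub V ∧
      z - (x + y) ∈ onesSub V ∧ 0 ≤ gform ε x y

/-!
With `x = [R] - z`, `y = z` and `d = z v - z w`, twice the form is a sum over ordered pairs of
`ε(v,w) · ((c - d) · d)` with `c = [R]_v - [R]_w ∈ {-1, 0, 1}`, and an integer `d` never lies strictly
between `0` and `c`, so every term is `≤ 0`. Loops add terms `ε(v,v) · (([R]_v - z_v) · z_v)`, nonpositive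
for the same reason.
-/

section Form

variable {V : Type*} [Fintype V] [DecidableEq V] (ε : V → V → ℕ)

-- A loop `ε v v` is counted in `d(v)` but not in the off-diagonal sum; it survives as the last term.
theorem gform_eq_sum_add_loops (x y : V → ℤ) :
    gform ε x y = ∑ v, ∑ w, (ε v w : ℤ) * (x v * (y v - y w)) + ∑ v, (ε v v : ℤ) * (x v * y v) := by
  simp only [gform, Finset.filter_ne', Finset.sum_erase_eq_sub (Finset.mem_univ _), Finset.sum_mul,
    mul_sub, Finset.sum_sub_distrib]
  ring

theorem two_mul_gform_eq_sum_add_loops (hsymm : ∀ v w, ε v w = ε w v) (x y : V → ℤ) :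
    2 * gform ε x y = ∑ v, ∑ w, (ε v w : ℤ) * ((x v - x w) * (y v - y w))
      + 2 * ∑ v, (ε v v : ℤ) * (x v * y v) := by
  have hswap : ∑ v, ∑ w, (ε v w : ℤ) * (x v * (y v - y w))
      = ∑ v, ∑ w, (ε v w : ℤ) * (-x w * (y v - y w)) := by
    rw [Finset.sum_comm]
    simp only [hsymm _, neg_mul, ← mul_neg, neg_sub]
  have hsplit : ∑ v, ∑ w, (ε v w : ℤ) * ((x v - x w) * (y v - y w))
      = ∑ v, ∑ w, (ε v w : ℤ) * (x v * (y v - y w))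
        + ∑ v, ∑ w, (ε v w : ℤ) * (-x w * (y v - y w)) := by
    simp only [← Finset.sum_add_distrib, ← mul_add, ← add_mul, sub_eq_add_neg]
  rw [gform_eq_sum_add_loops, hsplit, ← hswap]
  ring

end Form

theorem sub_mul_nonpos_of_abs_le_one {c : ℤ} (hc : |c| ≤ 1) (d : ℤ) : (c - d) * d ≤ 0 := by
  rcases lt_trichotomy d 0 with h | rfl | h
  · nlinarith [abs_le.mp hc]
  · simp
  · nlinarith [abs_le.mp hc]

theorem abs_chiF_le_one {V : Type*} [DecidableEq V] (R : Finset V) (v : V) : |chiF R v| ≤ 1 := by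
  unfold chiF; split_ifs <;> simp

theorem abs_chiF_sub_chiF_le_one {V : Type*} [DecidableEq V] (R : Finset V) (v w : V) :
    |chiF R v - chiF R w| ≤ 1 := by
  unfold chiF; split_ifs <;> simp

theorem stmt_3_general {V : Type*} [Fintype V] [DecidableEq V] (ε : V → V → ℕ)
    (hsymm : ∀ v w, ε v w = ε w v)
    (R : Finset V) (z : V → ℤ) :
    gform ε (chiF R - z) z ≤ 0 := by
  have hedge : ∀ v w, (ε v w : ℤ) * (((chiF R - z) v - (chiF R - z) w) * (z v - z w)) ≤ 0 :=
    fun v w => mul_nonpos_of_nonneg_of_nonpos (by positivity) <| by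
      simpa only [Pi.sub_apply, sub_sub_sub_comm] using
        sub_mul_nonpos_of_abs_le_one (abs_chiF_sub_chiF_le_one R v w) (z v - z w)
  have hdiag : ∀ v, (ε v v : ℤ) * ((chiF R - z) v * z v) ≤ 0 :=
    fun v => mul_nonpos_of_nonneg_of_nonpos (by positivity) <|
      sub_mul_nonpos_of_abs_le_one (abs_chiF_le_one R v) (z v)
  have htwice : 2 * gform ε (chiF R - z) z ≤ 0 := by
    rw [two_mul_gform_eq_sum_add_loops ε hsymm]
    exact add_nonpos (Finset.sum_nonpos fun v _ => Finset.sum_nonpos fun w _ => hedge v w)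
      (mul_nonpos_of_nonneg_of_nonpos zero_le_two (Finset.sum_nonpos fun v _ => hdiag v))
  linarith

theorem stmt_3 {V : Type*} [Fintype V] [DecidableEq V] (ε : V → V → ℕ)
    (hcard : 2 ≤ Fintype.card V)
    (hsymm : ∀ v w, ε v w = ε w v) (hloop : ∀ v, ε v v = 0)
    (hconn : (gGraph ε).Connected)
    (R : Finset V) (z : V → ℤ) :
    gform ε (chiF R - z) z ≤ 0 :=
  stmt_3_general ε hsymm R z
end

section
/- Let G be a finite connected multigraph without self-loops on vertex set V, with graph lattice Λ(G) = ℤ^V/ℤ[V]. Let x ∈ ℤ^V with x ∉ ℤ[V]. Then the class of x in Λ(G) is irreducible if and only if there exists a subset R ⊆ V with R ≠ ∅ and R ≠ V such that x − [R] ∈ ℤ[V] and both the sub-multigraphs of G induced on R and on V∖R are connected. -/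
/-!
Write the form through its edge expansion `2 x·y = Σ_{v,w} ε(v,w) (x_v - x_w) (y_v - y_w)`.
If `T` is the set where a nonconstant `x` attains its maximum, then `[T]·(x - [T]) ≥ 0`, so an
irreducible `x` is `[T]` modulo `[V]`. If `R` splits into two parts with no edge between them,
`[R]` is the sum of their characteristic vectors, which are orthogonal; the same applies to
`V∖R` through `-x ≡ [V∖R]`. Conversely, if `[R] ≡ y + z` with `y·z ≥ 0`, the two factors of each
edge term add up to `0` or `±1`, so every edge term vanishes: `y` and `z` are then constant on
the connected pieces `R` and `V∖R`, and an edge between the two pieces makes one of them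
constant.
-/

open Finset

theorem SimpleGraph.Preconnected.apply_eq_of_adj {α β : Type*} {G : SimpleGraph α}
    (hG : G.Preconnected) {f : α → β} (hf : ∀ a b, G.Adj a b → f a = f b) (a b : α) :
    f a = f b := by
  obtain ⟨p⟩ := hG a b
  induction p with
  | nil => rfl
  | cons h _ ih => exact (hf _ _ h).trans ih

section Lattice

variable {V : Type*}

theorem mem_onesSub_iff {x : V → ℤ} : x ∈ onesSub V ↔ ∀ v w, x v = x w := by
  rw [onesSub, Submodule.mem_span_singleton]
  constructor
  · rintro ⟨a, rfl⟩ v w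
    rfl
  · intro h
    cases isEmpty_or_nonempty V with
    | inl _ => exact ⟨0, Subsingleton.elim _ _⟩
    | inr hV => exact ⟨x hV.some, funext fun v => by simp [h v hV.some]⟩

theorem notMem_onesSub_of_ne {x : V → ℤ} {v w : V} (h : x v ≠ x w) : x ∉ onesSub V :=
  fun hx => h (mem_onesSub_iff.mp hx v w)

variable [DecidableEq V]

theorem chiF_notMem_onesSub {A : Finset V} {v w : V} (hv : v ∈ A) (hw : w ∉ A) :
    chiF A ∉ onesSub V :=
  notMem_onesSub_of_ne (v := v) (w := w) (by simp [chiF, hv, hw])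

theorem chiF_union {A B : Finset V} (h : Disjoint A B) : chiF (A ∪ B) = chiF A + chiF B := by
  funext v
  by_cases hA : v ∈ A
  · simp [chiF, hA, disjoint_left.mp h hA]
  · simp [chiF, hA]

theorem chiF_compl [Fintype V] (R : Finset V) : chiF Rᶜ = 1 - chiF R := by
  funext v
  by_cases hv : v ∈ R <;> simp [chiF, hv]

end Lattice

section Graph

variable {V : Type*} {ε : V → V → ℕ}

theorem gGraph_apply_eq_of_adj (hconn : (gGraph ε).Connected) {β : Type*} {f : V → β}
    (hf : ∀ v w, 0 < ε v w → f v = f w) (v w : V) : f v = f w := by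
  refine hconn.preconnected.apply_eq_of_adj (fun a b hab => ?_) v w
  obtain ⟨-, h | h⟩ := hab
  exacts [hf a b h, (hf b a h).symm]

theorem gConnOn.apply_eq_of_adj {S : Set V} (hS : gConnOn ε S) {β : Type*} {f : V → β}
    (hf : ∀ v ∈ S, ∀ w ∈ S, 0 < ε v w → f v = f w) {v w : V} (hv : v ∈ S) (hw : w ∈ S) :
    f v = f w := by
  refine hS.preconnected.apply_eq_of_adj (f := fun a : S => f a) (fun a b hab => ?_)
    ⟨v, hv⟩ ⟨w, hw⟩
  obtain ⟨-, h | h⟩ := hab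
  exacts [hf a a.2 b b.2 h, (hf b b.2 a a.2 h).symm]

theorem exists_adj_ne_of_gGraph_connected (hconn : (gGraph ε).Connected) {β : Type*}
    {f : V → β} {v w : V} (h : f v ≠ f w) : ∃ a b, 0 < ε a b ∧ f a ≠ f b := by
  by_contra! hf
  exact h (gGraph_apply_eq_of_adj hconn hf v w)

theorem exists_partition_of_not_gConnOn [DecidableEq V] {R : Finset V} (hR : R.Nonempty)
    (h : ¬ gConnOn ε R) :
    ∃ A B : Finset V, A.Nonempty ∧ B.Nonempty ∧ Disjoint A B ∧ A ∪ B = R ∧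
      ∀ v ∈ A, ∀ w ∈ B, ε v w = 0 := by
  classical
  set H := SimpleGraph.fromRel fun v w : (R : Set V) => 0 < ε v w
  have : Nonempty (R : Set V) := hR.coe_sort
  obtain ⟨a, b, hab⟩ : ∃ a b, ¬ H.Reachable a b := by
    by_contra! hp
    exact h ((SimpleGraph.connected_iff H).mpr ⟨hp, this⟩)
  set P : V → Prop := fun v => ∃ hv : v ∈ (R : Set V), H.Reachable a ⟨v, hv⟩
  refine ⟨R.filter P, R.filter (¬ P ·), ⟨a, mem_filter.mpr ⟨a.2, a.2, .rfl⟩⟩,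
    ⟨b, mem_filter.mpr ⟨b.2, fun ⟨_, hr⟩ => hab hr⟩⟩, disjoint_filter_filter_not _ _ _,
    filter_union_filter_not_eq _ _, fun v hv w hw => ?_⟩
  obtain ⟨hvR, hPv⟩ := mem_filter.mp hv
  obtain ⟨hwR, hPw⟩ := mem_filter.mp hw
  by_contra hvw
  obtain ⟨hvR', hav⟩ := hPv
  have hne : v ≠ w := by rintro rfl; exact hPw ⟨hvR', hav⟩
  exact hPw ⟨hwR, hav.trans (SimpleGraph.Adj.reachable
    ⟨fun h => hne (congrArg Subtype.val h), Or.inl (Nat.pos_of_ne_zero hvw)⟩)⟩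

theorem mem_onesSub_of_gConnOn {S : Set V} (hS : gConnOn ε S) (hSc : gConnOn ε Sᶜ)
    {f : V → ℤ} (hf : ∀ v w, 0 < ε v w → (v ∈ S ↔ w ∈ S) → f v = f w) {u u' : V}
    (hu : ¬(u ∈ S ↔ u' ∈ S)) (h : f u = f u') : f ∈ onesSub V := by
  have hside (v w : V) (hvw : v ∈ S ↔ w ∈ S) : f v = f w := by
    by_cases hv : v ∈ S
    · exact hS.apply_eq_of_adj (fun a ha b hb hab => hf a b hab (iff_of_true ha hb)) hv
        (hvw.mp hv)
    · exact hSc.apply_eq_of_adj (fun a ha b hb hab => hf a b hab (iff_of_false ha hb)) hv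
        (mt hvw.mpr hv)
  have hu_eq (v : V) : f v = f u := by
    by_cases hvu : v ∈ S ↔ u ∈ S
    · exact hside v u hvu
    · exact (hside v u' (by tauto)).trans h.symm
  exact mem_onesSub_iff.mpr fun v w => (hu_eq v).trans (hu_eq w).symm

end Graph

section Form

variable {V : Type*} [Fintype V] [DecidableEq V] {ε : V → V → ℕ}

theorem gform_neg_neg (x y : V → ℤ) : gform ε (-x) (-y) = gform ε x y := by
  simp [gform]

theorem gform_chiF_eq_zero {A B : Finset V} (hAB : Disjoint A B)
    (hε : ∀ v ∈ A, ∀ w ∈ B, ε v w = 0) : gform ε (chiF A) (chiF B) = 0 := by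
  have hdiag (v : V) : chiF A v * chiF B v = 0 := by
    by_cases hv : v ∈ A
    · simp [chiF, hv, disjoint_left.mp hAB hv]
    · simp [chiF, hv]
  have hoff (v w : V) : (ε v w : ℤ) * (chiF A v * chiF B w) = 0 := by
    by_cases hv : v ∈ A <;> by_cases hw : w ∈ B
    · simp [hε v hv w hw]
    all_goals simp [chiF, hv, hw]
  simp [gform, hdiag, hoff]

variable (hsymm : ∀ v w, ε v w = ε w v) (hloop : ∀ v, ε v v = 0)
include hsymm hloop

theorem two_mul_gform (x y : V → ℤ) :
    2 * gform ε x y = ∑ v, ∑ w, (ε v w : ℤ) * ((x v - x w) * (y v - y w)) := by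
  have hdiag (v : V) : ∑ w ∈ univ.filter (· ≠ v), (ε v w : ℤ) * (x v * y w) =
      ∑ w, (ε v w : ℤ) * (x v * y w) := by
    refine sum_filter_of_ne fun w _ h => ?_
    rintro rfl
    simp [hloop] at h
  have hswap (f : V → V → ℤ) : ∑ v, ∑ w, (ε v w : ℤ) * f w v = ∑ v, ∑ w, (ε v w : ℤ) * f v w := by
    rw [sum_comm]
    simp only [hsymm]
  have hswap_diag := hswap fun v _ => x v * y v
  have hswap_off := hswap fun v w => x v * y w
  have hexpand : ∀ v w, (ε v w : ℤ) * ((x v - x w) * (y v - y w)) =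
      ε v w * (x v * y v) + ε v w * (x w * y w) - ε v w * (x v * y w) - ε v w * (x w * y v) :=
    fun v w => by ring
  simp only [gform, hdiag, hexpand, sum_sub_distrib, sum_add_distrib, sum_mul] at *
  linarith

theorem gform_congr_right {x y y' : V → ℤ} (h : y - y' ∈ onesSub V) :
    gform ε x y = gform ε x y' := by
  have hdiff (v w : V) : y v - y w = y' v - y' w := by
    have := mem_onesSub_iff.mp h v w
    simp only [Pi.sub_apply] at this
    linarith
  have := two_mul_gform hsymm hloop x y
  simp only [hdiff] at this
  linarith [two_mul_gform hsymm hloop x y']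

theorem gform_nonneg_of_forall {x y : V → ℤ}
    (h : ∀ v w, 0 < ε v w → 0 ≤ (x v - x w) * (y v - y w)) : 0 ≤ gform ε x y := by
  have hterm (v w : V) : 0 ≤ (ε v w : ℤ) * ((x v - x w) * (y v - y w)) := by
    rcases (ε v w).eq_zero_or_pos with h0 | hpos
    · simp [h0]
    · exact mul_nonneg (Int.natCast_nonneg _) (h v w hpos)
  have hsum : 0 ≤ ∑ v, ∑ w, (ε v w : ℤ) * ((x v - x w) * (y v - y w)) :=
    sum_nonneg fun v _ => sum_nonneg fun w _ => hterm v w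
  linarith [two_mul_gform hsymm hloop x y]

theorem mul_eq_zero_of_gform_nonneg {x y : V → ℤ}
    (h : ∀ v w, (x v - x w) * (y v - y w) ≤ 0) (h0 : 0 ≤ gform ε x y) {v w : V}
    (hvw : 0 < ε v w) : (x v - x w) * (y v - y w) = 0 := by
  have hterm (v w : V) : (ε v w : ℤ) * ((x v - x w) * (y v - y w)) ≤ 0 :=
    mul_nonpos_of_nonneg_of_nonpos (Int.natCast_nonneg _) (h v w)
  have hrow (v : V) : ∑ w, (ε v w : ℤ) * ((x v - x w) * (y v - y w)) ≤ 0 :=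
    sum_nonpos fun w _ => hterm v w
  have hsum : ∑ v, ∑ w, (ε v w : ℤ) * ((x v - x w) * (y v - y w)) = 0 :=
    le_antisymm (sum_nonpos fun v _ => hrow v) (two_mul_gform hsymm hloop x y ▸ by omega)
  have hrow0 := (sum_eq_zero_iff_of_nonpos fun v _ => hrow v).mp hsum v (mem_univ v)
  have := (sum_eq_zero_iff_of_nonpos fun w _ => hterm v w).mp hrow0 w (mem_univ w)
  exact (mul_eq_zero.mp this).resolve_left (by exact_mod_cast hvw.ne')

end Form

theorem Int.mul_nonpos_of_abs_add_le_one {a b : ℤ} (h : |a + b| ≤ 1) : a * b ≤ 0 := by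
  rw [abs_le] at h
  nlinarith [sq_nonneg (a - b)]

section Irreducible

variable {V : Type*} [Fintype V] [DecidableEq V] {ε : V → V → ℕ}

theorem gIrredRep.of_sub_mem {x x' : V → ℤ} (h : gIrredRep ε x) (hx : x - x' ∈ onesSub V) :
    gIrredRep ε x' := by
  rintro ⟨y, z, hy, hz, hm, hp⟩
  exact h ⟨y, z, hy, hz, by simpa using add_mem hx hm, hp⟩

theorem gIrredRep.neg {x : V → ℤ} (h : gIrredRep ε x) : gIrredRep ε (-x) := by
  rintro ⟨y, z, hy, hz, hm, hp⟩
  refine h ⟨-y, -z, by rwa [neg_mem_iff], by rwa [neg_mem_iff], ?_, by rwa [gform_neg_neg]⟩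
  convert neg_mem hm using 1
  abel

theorem gConnOn_of_gIrredRep_chiF {R : Finset V} (hR : R.Nonempty)
    (h : gIrredRep ε (chiF R)) : gConnOn ε R := by
  by_contra hc
  obtain ⟨A, B, ⟨a, ha⟩, ⟨b, hb⟩, hAB, rfl, hε⟩ := exists_partition_of_not_gConnOn hR hc
  refine h ⟨chiF A, chiF B, chiF_notMem_onesSub ha (disjoint_right.mp hAB hb),
    chiF_notMem_onesSub hb (disjoint_left.mp hAB ha), ?_, (gform_chiF_eq_zero hAB hε).ge⟩
  rw [chiF_union hAB, sub_self]
  exact zero_mem _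

variable (hsymm : ∀ v w, ε v w = ε w v) (hloop : ∀ v, ε v v = 0)
include hsymm hloop

theorem gform_chiF_sub_chiF_nonneg {x : V → ℤ} {T : Finset V}
    (hT : ∀ v ∈ T, ∀ w ∉ T, x w < x v) : 0 ≤ gform ε (chiF T) (x - chiF T) := by
  refine gform_nonneg_of_forall hsymm hloop fun v w _ => ?_
  by_cases hv : v ∈ T <;> by_cases hw : w ∈ T <;> simp [chiF, hv, hw]
  · linarith [hT v hv w hw]
  · linarith [hT w hw v hv]

theorem exists_chiF_of_gIrredRep {x : V → ℤ} (hx : x ∉ onesSub V) (h : gIrredRep ε x) :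
    ∃ R : Finset V, R.Nonempty ∧ R ≠ univ ∧ x - chiF R ∈ onesSub V := by
  obtain ⟨p, q, hpq⟩ : ∃ p q, x p ≠ x q := by
    by_contra! hc
    exact hx (mem_onesSub_iff.mpr hc)
  obtain ⟨m, -, hm⟩ := exists_max_image univ x ⟨p, mem_univ p⟩
  set T := univ.filter (x · = x m)
  have hmT : m ∈ T := by simp [T]
  obtain ⟨w, hw⟩ : ∃ w, w ∉ T := by
    by_contra! hc
    simp only [T, mem_filter, mem_univ, true_and] at hc
    exact hpq ((hc p).trans (hc q).symm)
  have hT : ∀ v ∈ T, ∀ w ∉ T, x w < x v := by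
    intro v hv w hw
    simp only [T, mem_filter, mem_univ, true_and] at hv hw
    exact hv ▸ lt_of_le_of_ne (hm w (mem_univ w)) hw
  refine ⟨T, ⟨m, hmT⟩, fun hT => hw (hT ▸ mem_univ w), ?_⟩
  by_contra hxT
  exact h ⟨chiF T, x - chiF T, chiF_notMem_onesSub hmT hw, hxT, by simp,
    gform_chiF_sub_chiF_nonneg hsymm hloop hT⟩

theorem gIrredRep_chiF (hconn : (gGraph ε).Connected) {R : Finset V} (hR : gConnOn ε R)
    (hRc : gConnOn ε (R : Set V)ᶜ) : gIrredRep ε (chiF R) := by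
  rintro ⟨y, z, hy, hz, hsum, hpos⟩
  set z' := chiF R - y
  have hzz' : z' - z ∈ onesSub V := by simpa only [z', sub_sub] using hsum
  have hz' : z' ∉ onesSub V := fun h => hz (by simpa using sub_mem h hzz')
  have hadd (v : V) : y v + z' v = chiF R v := by simp [z']
  have hprod : ∀ {v w}, 0 < ε v w → (y v - y w) * (z' v - z' w) = 0 := by
    refine mul_eq_zero_of_gform_nonneg hsymm hloop (fun v w => ?_)
      (by rwa [gform_congr_right hsymm hloop hzz'])
    refine Int.mul_nonpos_of_abs_add_le_one ?_
    rw [show y v - y w + (z' v - z' w) = chiF R v - chiF R w by rw [← hadd, ← hadd]; ring]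
    by_cases hv : v ∈ R <;> by_cases hw : w ∈ R <;> simp [chiF, hv, hw]
  have hy_side (v w : V) (hvw : 0 < ε v w) (hR' : v ∈ (R : Set V) ↔ w ∈ (R : Set V)) :
      y v = y w := by
    have hchi : chiF R v = chiF R w := by simp only [chiF, ← Finset.mem_coe, hR']
    have hz'_diff : z' v - z' w = -(y v - y w) := by linarith [hadd v, hadd w]
    have h0 := hprod hvw
    rwa [hz'_diff, mul_neg, neg_eq_zero, mul_self_eq_zero, sub_eq_zero] at h0
  have hz'_side (v w : V) (hvw : 0 < ε v w) (hR' : v ∈ (R : Set V) ↔ w ∈ (R : Set V)) :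
      z' v = z' w := by
    have hchi : chiF R v = chiF R w := by simp only [chiF, ← Finset.mem_coe, hR']
    linarith [hadd v, hadd w, hy_side v w hvw hR']
  obtain ⟨⟨r, hr⟩⟩ := hR.nonempty
  obtain ⟨⟨s, hs⟩⟩ := hRc.nonempty
  obtain ⟨u, u', huu', hne⟩ := exists_adj_ne_of_gGraph_connected hconn
    (f := (· ∈ (R : Set V))) (v := r) (w := s) fun h => hs (h ▸ hr)
  have hne' : ¬(u ∈ (R : Set V) ↔ u' ∈ (R : Set V)) := fun h => hne (propext h)
  rcases mul_eq_zero.mp (hprod huu') with h | h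
  · exact hy (mem_onesSub_of_gConnOn hR hRc hy_side hne' (sub_eq_zero.mp h))
  · exact hz' (mem_onesSub_of_gConnOn hR hRc hz'_side hne' (sub_eq_zero.mp h))

end Irreducible

theorem stmt_4_general {V : Type*} [Fintype V] [DecidableEq V] (ε : V → V → ℕ)
    (hsymm : ∀ v w, ε v w = ε w v) (hloop : ∀ v, ε v v = 0)
    (hconn : (gGraph ε).Connected)
    (x : V → ℤ) (hx : x ∉ onesSub V) :
    gIrredRep ε x ↔
      ∃ R : Finset V, R ≠ ∅ ∧ R ≠ Finset.univ ∧ x - chiF R ∈ onesSub V ∧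
        gConnOn ε (↑R : Set V) ∧ gConnOn ε ((↑R : Set V)ᶜ) := by
  constructor
  · intro h
    obtain ⟨R, hR, hRuniv, hxR⟩ := exists_chiF_of_gIrredRep hsymm hloop hx h
    have hRc : -x - chiF Rᶜ ∈ onesSub V := by
      rw [chiF_compl]
      convert sub_mem (neg_mem hxR) (Submodule.subset_span rfl : (1 : V → ℤ) ∈ onesSub V)
        using 1
      abel
    refine ⟨R, hR.ne_empty, hRuniv, hxR, gConnOn_of_gIrredRep_chiF hR (h.of_sub_mem hxR), ?_⟩
    rw [← coe_compl]
    exact gConnOn_of_gIrredRep_chiF (by rwa [nonempty_iff_ne_empty, Ne, compl_eq_empty_iff])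
      (h.neg.of_sub_mem hRc)
  · rintro ⟨R, -, -, hxR, hR, hRc⟩
    exact (gIrredRep_chiF hsymm hloop hconn hR hRc).of_sub_mem (by rwa [← neg_mem_iff, neg_sub])

/-- Lemma 3.2 of the paper: a nonzero class `x` in the graph lattice `Λ(G)` of a
connected multigraph `G` is irreducible iff `x = [R]` for some `R ⊆ V` such that
the sub-multigraphs induced on `R` and on `V∖R` are both connected. -/
theorem stmt_4 {V : Type*} [Fintype V] [DecidableEq V] (ε : V → V → ℕ)
    (hcard : 2 ≤ Fintype.card V)
    (hsymm : ∀ v w, ε v w = ε w v) (hloop : ∀ v, ε v v = 0)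
    (hconn : (gGraph ε).Connected)
    (x : V → ℤ) (hx : x ∉ onesSub V) :
    gIrredRep ε x ↔
      ∃ R : Finset V, R ≠ ∅ ∧ R ≠ Finset.univ ∧ x - chiF R ∈ onesSub V ∧
        gConnOn ε (↑R : Set V) ∧ gConnOn ε ((↑R : Set V)ᶜ) :=
  stmt_4_general ε hsymm hloop hconn x hx
end
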